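/- Let E, S, H be real Banach spaces, let A : E → E be a bounded (continuous) linear operator, let L : S → H be a continuous linear isomorphism, let F : ℝ × E × S → E be continuous and, for every t′ > 0 and r > 0, Lipschitz in (V, w) with some constant L(t′, r) on the set {t ∈ [0, t′], ‖V‖_E + ‖w‖_S ≤ r}, and let G : ℝ × E → H be continuous and, for every t′ > 0 and C > 0, Lipschitz in V with some constant L₂(t′, C) on the set {t ∈ [0, t′], ‖V‖_E ≤ C}. Then for every V₀ ∈ E there exists ε > 0 and a unique pair of continuous functions V : [0, ε] → E, w : [0, ε] → S such that V(0) = V₀ and, for every t ∈ [0, ε], V is differentiable at t with V′(t) = A(V(t)) + F(t, V(t), w(t)) and L(w(t)) = G(t, V(t)). -/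

import Mathlib

/-!
Since `L` is an isomorphism, the algebraic equation determines `w = L⁻¹ G(t, V)`, and the system
reduces to the ODE `V' = A V + F(t, V, L⁻¹ G(t, V))`. The Lipschitz bounds on `G` make `L⁻¹ G(t, ·)`
Lipschitz and bounded on balls, so it keeps `(V, w)` in a region where `F` is Lipschitz, and the
reduced vector field is Lipschitz on balls uniformly in `t`. Picard–Lindelöf gives a local solution
and Grönwall's inequality its uniqueness; `w` is then recovered from `V`.
-/

open Set Metric NNReal Function

def UniformlyLipschitzOnBalls {α E F : Type*} [SeminormedAddCommGroup E]
    [SeminormedAddCommGroup F] (v : α → E → F) (s : Set α) : Prop :=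
  ∀ C > (0 : ℝ), ∃ K : ℝ≥0, ∀ t ∈ s, LipschitzOnWith K (v t) (closedBall 0 C)

namespace UniformlyLipschitzOnBalls

variable {α E F : Type*} [SeminormedAddCommGroup E] [SeminormedAddCommGroup F]
  {v : α → E → F} {s : Set α}

theorem mono (hv : UniformlyLipschitzOnBalls v s) {s' : Set α} (hs' : s' ⊆ s) :
    UniformlyLipschitzOnBalls v s' := fun C hC ↦
  let ⟨K, hK⟩ := hv C hC
  ⟨K, fun t ht ↦ hK t (hs' ht)⟩

theorem of_norm_sub_le
    (hv : ∀ C > (0 : ℝ), ∃ K ≥ (0 : ℝ), ∀ t ∈ s, ∀ x y : E,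
      ‖x‖ ≤ C → ‖y‖ ≤ C → ‖v t x - v t y‖ ≤ K * ‖x - y‖) :
    UniformlyLipschitzOnBalls v s := by
  intro C hC
  obtain ⟨K, hK0, hK⟩ := hv C hC
  refine ⟨⟨K, hK0⟩, fun t ht ↦ LipschitzOnWith.of_dist_le_mul fun x hx y hy ↦ ?_⟩
  rw [mem_closedBall_zero_iff] at hx hy
  rw [dist_eq_norm, dist_eq_norm]
  exact hK t ht x y hx hy

end UniformlyLipschitzOnBalls

theorem exists_norm_le_of_lipschitzOnWith {α E F : Type*} [TopologicalSpace α]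
    [SeminormedAddCommGroup E] [SeminormedAddCommGroup F] {v : α → E → F} {s : Set α}
    (hs : IsCompact s) (hc : ContinuousOn (fun t ↦ v t 0) s) {K : ℝ≥0} {C : ℝ}
    (hv : ∀ t ∈ s, LipschitzOnWith K (v t) (closedBall 0 C)) :
    ∃ M, ∀ t ∈ s, ∀ x ∈ closedBall 0 C, ‖v t x‖ ≤ M := by
  obtain ⟨M₀, hM₀⟩ := hs.exists_bound_of_continuousOn hc
  refine ⟨M₀ + K * C, fun t ht x hx ↦ ?_⟩
  have h0 : (0 : E) ∈ closedBall 0 C := mem_closedBall_self (dist_nonneg.trans hx)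
  have hx' : dist x 0 ≤ C := hx
  calc ‖v t x‖ ≤ ‖v t 0‖ + dist (v t x) (v t 0) := by
        rw [dist_eq_norm]; exact norm_le_norm_add_norm_sub' _ _
    _ ≤ M₀ + K * C := add_le_add (hM₀ t ht)
        (((hv t ht).dist_le_mul x hx 0 h0).trans (by gcongr))

section ODE

variable {E : Type*} [NormedAddCommGroup E] [NormedSpace ℝ E] {v : ℝ → E → E}

theorem UniformlyLipschitzOnBalls.eqOn_Icc {a b : ℝ} (hv : UniformlyLipschitzOnBalls v (Ico a b))
    {f g : ℝ → E} (hf : ContinuousOn f (Icc a b))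
    (hf' : ∀ t ∈ Ico a b, HasDerivWithinAt f (v t (f t)) (Ici t) t)
    (hg : ContinuousOn g (Icc a b))
    (hg' : ∀ t ∈ Ico a b, HasDerivWithinAt g (v t (g t)) (Ici t) t) (ha : f a = g a) :
    EqOn f g (Icc a b) := by
  obtain ⟨Bf, hBf⟩ := isCompact_Icc.exists_bound_of_continuousOn hf
  obtain ⟨Bg, hBg⟩ := isCompact_Icc.exists_bound_of_continuousOn hg
  set C := max (max Bf Bg) 1
  obtain ⟨K, hK⟩ := hv C (lt_max_of_lt_right one_pos)
  have hfC : ∀ t ∈ Ico a b, f t ∈ closedBall 0 C := fun t ht ↦ mem_closedBall_zero_iff.2 <|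
    (hBf t (Ico_subset_Icc_self ht)).trans ((le_max_left _ _).trans (le_max_left _ _))
  have hgC : ∀ t ∈ Ico a b, g t ∈ closedBall 0 C := fun t ht ↦ mem_closedBall_zero_iff.2 <|
    (hBg t (Ico_subset_Icc_self ht)).trans ((le_max_right _ _).trans (le_max_left _ _))
  exact ODE_solution_unique_of_mem_Icc_right hK hf hf' hfC hg hg' hgC ha

variable [CompleteSpace E]

theorem UniformlyLipschitzOnBalls.exists_hasDerivAt {T : ℝ} (hT : 0 < T)
    (hv : UniformlyLipschitzOnBalls v (Icc 0 T)) (hc : ∀ x, ContinuousOn (v · x) (Icc 0 T))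
    (x₀ : E) :
    ∃ ε > (0 : ℝ), ∃ f : ℝ → E, f 0 = x₀ ∧ ∀ t ∈ Icc 0 ε, HasDerivAt f (v t (f t)) t := by
  obtain ⟨K, hK⟩ := hv (‖x₀‖ + 1) (by positivity)
  have hball : closedBall x₀ 1 ⊆ closedBall 0 (‖x₀‖ + 1) :=
    closedBall_subset_closedBall' (by rw [dist_zero_right, add_comm])
  obtain ⟨M, hM⟩ := exists_norm_le_of_lipschitzOnWith isCompact_Icc (hc 0) hK
  -- `HasDerivAt` at `t = 0` needs a two-sided time interval: clamp time to `[0, T]`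
  set u : ℝ → E → E := fun t ↦ v (projIcc 0 T hT.le t)
  set a := min T (1 / (M.toNNReal + 1))
  have ha : 0 < a := lt_min hT (by positivity)
  have hpl : IsPicardLindelof u (tmin := -a) (tmax := a) ⟨0, by simp [ha.le]⟩ x₀ 1 0
      M.toNNReal K := {
    lipschitzOnWith t _ := (hK _ (projIcc 0 T hT.le t).2).mono hball
    continuousOn x _ := ((hc x).comp_continuous (continuous_subtype_val.comp continuous_projIcc)
      fun t ↦ (projIcc 0 T hT.le t).2).continuousOn
    norm_le t _ x hx := (hM _ (projIcc 0 T hT.le t).2 x (hball hx)).trans (Real.le_coe_toNNReal M)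
    mul_max_le := by
      simp only [sub_zero, zero_sub, neg_neg, max_self, NNReal.coe_one, NNReal.coe_zero]
      calc (M.toNNReal : ℝ) * a ≤ M.toNNReal * (1 / (M.toNNReal + 1)) := by
            gcongr; exact min_le_right _ _
        _ ≤ 1 := by rw [mul_one_div, div_le_one (by positivity)]; linarith }
  obtain ⟨f, hf0, hf⟩ := hpl.exists_eq_forall_mem_Icc_hasDerivWithinAt₀
  refine ⟨a / 2, by positivity, f, hf0, fun t ht ↦ ?_⟩
  have htT : t ∈ Icc 0 T := ⟨ht.1, by linarith [ht.2, min_le_left T (1 / (M.toNNReal + 1))]⟩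
  have hderiv := (hf t ⟨by linarith [ht.1], by linarith [ht.2]⟩).hasDerivAt
    (Icc_mem_nhds (by linarith [ht.1]) (by linarith [ht.2]))
  simpa only [u, projIcc_of_mem hT.le htT] using hderiv

end ODE

theorem lipschitzOnWith_comp_graph {E S F : Type*} [SeminormedAddCommGroup E]
    [SeminormedAddCommGroup S] [SeminormedAddCommGroup F] {f : E × S → F}
    {w : E → S} {s : Set E} {r : ℝ} {Kf Kw : ℝ≥0}
    (hf : ∀ V₁ V₂ : E, ∀ w₁ w₂ : S, ‖V₁‖ + ‖w₁‖ ≤ r → ‖V₂‖ + ‖w₂‖ ≤ r →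
      ‖f (V₁, w₁) - f (V₂, w₂)‖ ≤ Kf * (‖V₁ - V₂‖ + ‖w₁ - w₂‖))
    (hw : LipschitzOnWith Kw w s) (hr : ∀ x ∈ s, ‖x‖ + ‖w x‖ ≤ r) :
    LipschitzOnWith (Kf * (1 + Kw)) (fun x ↦ f (x, w x)) s := by
  refine LipschitzOnWith.of_dist_le_mul fun x hx y hy ↦ ?_
  have hwxy : ‖w x - w y‖ ≤ Kw * ‖x - y‖ := by
    simpa only [dist_eq_norm] using hw.dist_le_mul x hx y hy
  rw [dist_eq_norm, dist_eq_norm]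
  calc ‖f (x, w x) - f (y, w y)‖ ≤ Kf * (‖x - y‖ + ‖w x - w y‖) := hf x y _ _ (hr x hx) (hr y hy)
    _ ≤ Kf * (‖x - y‖ + Kw * ‖x - y‖) := by gcongr
    _ = ↑(Kf * (1 + Kw)) * ‖x - y‖ := by push_cast; ring

section Reduction

variable {E S H : Type*}
  [NormedAddCommGroup E] [NormedSpace ℝ E] [NormedAddCommGroup S] [NormedSpace ℝ S]
  [NormedAddCommGroup H] [NormedSpace ℝ H]

def reducedField (A : E →L[ℝ] E) (L : S ≃L[ℝ] H) (F : ℝ × E × S → E) (G : ℝ × E → H)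
    (t : ℝ) (x : E) : E :=
  A x + F (t, x, L.symm (G (t, x)))

variable (A : E →L[ℝ] E) (L : S ≃L[ℝ] H) {F : ℝ × E × S → E} {G : ℝ × E → H}

theorem continuous_uncurry_reducedField (hFc : Continuous F) (hGc : Continuous G) :
    Continuous (uncurry (reducedField A L F G)) := by
  unfold reducedField
  fun_prop

theorem uniformlyLipschitzOnBalls_reducedField (hGc : Continuous G)
    (hFlip : ∀ t' > (0 : ℝ), ∀ r > (0 : ℝ), ∃ Lip ≥ (0 : ℝ),
      ∀ t ∈ Icc (0 : ℝ) t', ∀ V₁ V₂ : E, ∀ w₁ w₂ : S,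
        ‖V₁‖ + ‖w₁‖ ≤ r → ‖V₂‖ + ‖w₂‖ ≤ r →
        ‖F (t, V₁, w₁) - F (t, V₂, w₂)‖ ≤ Lip * (‖V₁ - V₂‖ + ‖w₁ - w₂‖))
    (hGlip : ∀ t' > (0 : ℝ), ∀ C > (0 : ℝ), ∃ L₂ ≥ (0 : ℝ),
      ∀ t ∈ Icc (0 : ℝ) t', ∀ V₁ V₂ : E,
        ‖V₁‖ ≤ C → ‖V₂‖ ≤ C →
        ‖G (t, V₁) - G (t, V₂)‖ ≤ L₂ * ‖V₁ - V₂‖)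
    {T : ℝ} (hT : 0 < T) :
    UniformlyLipschitzOnBalls (reducedField A L F G) (Icc 0 T) := by
  intro C hC
  obtain ⟨K₂, hK₂⟩ :=
    UniformlyLipschitzOnBalls.of_norm_sub_le (v := fun t x ↦ G (t, x)) (hGlip T hT) C hC
  have hw : ∀ t ∈ Icc 0 T,
      LipschitzOnWith (‖(L.symm : H →L[ℝ] S)‖₊ * K₂) (fun x ↦ L.symm (G (t, x))) (closedBall 0 C) :=
    fun t ht ↦ (L.symm : H →L[ℝ] S).lipschitz.comp_lipschitzOnWith (hK₂ t ht)
  obtain ⟨W, hW⟩ := exists_norm_le_of_lipschitzOnWith isCompact_Icc (by fun_prop) hw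
  obtain ⟨Lip, hLip0, hLip⟩ := hFlip T hT (C + max W 0) (by positivity)
  lift Lip to ℝ≥0 using hLip0
  refine ⟨‖A‖₊ + Lip * (1 + ‖(L.symm : H →L[ℝ] S)‖₊ * K₂), fun t ht ↦ ?_⟩
  refine A.lipschitz.lipschitzOnWith.add
    (lipschitzOnWith_comp_graph (f := fun p ↦ F (t, p)) (hLip t ht) (hw t ht) fun x hx ↦ ?_)
  exact add_le_add (mem_closedBall_zero_iff.1 hx) ((hW t ht x hx).trans (le_max_left _ _))

end Reduction

theorem pdae_local_existence_uniqueness_general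
    {E S H : Type*}
    [NormedAddCommGroup E] [NormedSpace ℝ E] [CompleteSpace E]
    [NormedAddCommGroup S] [NormedSpace ℝ S]
    [NormedAddCommGroup H] [NormedSpace ℝ H]
    (A : E →L[ℝ] E) (L : S ≃L[ℝ] H)
    (F : ℝ × E × S → E) (hFc : Continuous F)
    (hFlip : ∀ t' > (0 : ℝ), ∀ r > (0 : ℝ), ∃ Lip ≥ (0 : ℝ),
      ∀ t ∈ Icc (0 : ℝ) t', ∀ V₁ V₂ : E, ∀ w₁ w₂ : S,
        ‖V₁‖ + ‖w₁‖ ≤ r → ‖V₂‖ + ‖w₂‖ ≤ r →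
        ‖F (t, V₁, w₁) - F (t, V₂, w₂)‖ ≤ Lip * (‖V₁ - V₂‖ + ‖w₁ - w₂‖))
    (G : ℝ × E → H) (hGc : Continuous G)
    (hGlip : ∀ t' > (0 : ℝ), ∀ C > (0 : ℝ), ∃ L₂ ≥ (0 : ℝ),
      ∀ t ∈ Icc (0 : ℝ) t', ∀ V₁ V₂ : E,
        ‖V₁‖ ≤ C → ‖V₂‖ ≤ C →
        ‖G (t, V₁) - G (t, V₂)‖ ≤ L₂ * ‖V₁ - V₂‖)
    (V₀ : E) :
    ∃ ε > (0 : ℝ), ∃ V : ℝ → E, ∃ w : ℝ → S,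
      (ContinuousOn V (Icc 0 ε) ∧ ContinuousOn w (Icc 0 ε) ∧
        V 0 = V₀ ∧
        ∀ t ∈ Icc (0 : ℝ) ε,
          HasDerivAt V (A (V t) + F (t, V t, w t)) t ∧ L (w t) = G (t, V t)) ∧
      ∀ V' : ℝ → E, ∀ w' : ℝ → S,
        (ContinuousOn V' (Icc 0 ε) ∧ ContinuousOn w' (Icc 0 ε) ∧
          V' 0 = V₀ ∧
          ∀ t ∈ Icc (0 : ℝ) ε,
            HasDerivAt V' (A (V' t) + F (t, V' t, w' t)) t ∧ L (w' t) = G (t, V' t)) →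
        ∀ t ∈ Icc (0 : ℝ) ε, V' t = V t ∧ w' t = w t := by
  have hv (T : ℝ) (hT : 0 < T) := uniformlyLipschitzOnBalls_reducedField A L hGc hFlip hGlip hT
  have hvc := continuous_uncurry_reducedField A L hFc hGc
  obtain ⟨ε, hε, V, hV0, hV⟩ := (hv 1 one_pos).exists_hasDerivAt one_pos
    (fun x ↦ (hvc.comp (continuous_id.prodMk continuous_const)).continuousOn) V₀
  have hVc : ContinuousOn V (Icc 0 ε) := fun t ht ↦ (hV t ht).continuousAt.continuousWithinAt
  refine ⟨ε, hε, V, fun t ↦ L.symm (G (t, V t)),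
    ⟨hVc, by fun_prop, hV0, fun t ht ↦ ⟨hV t ht, L.apply_symm_apply _⟩⟩, ?_⟩
  rintro V' w' ⟨hV'c, -, hV'0, hV'⟩
  have hw' : ∀ t ∈ Icc 0 ε, w' t = L.symm (G (t, V' t)) := fun t ht ↦
    L.eq_symm_apply.2 (hV' t ht).2
  have hV'V : EqOn V' V (Icc 0 ε) := ((hv ε hε).mono Ico_subset_Icc_self).eqOn_Icc hV'c
    (fun t ht ↦ by
      have h := (hV' t (Ico_subset_Icc_self ht)).1
      rw [hw' t (Ico_subset_Icc_self ht)] at h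
      exact h.hasDerivWithinAt)
    hVc (fun t ht ↦ (hV t (Ico_subset_Icc_self ht)).hasDerivWithinAt) (hV'0.trans hV0.symm)
  exact fun t ht ↦ ⟨hV'V ht, by rw [hw' t ht, hV'V ht]⟩

/-- Local existence and uniqueness for the abstract PDAE
`V' = A(V) + F(t, V, w)`, `0 = L(w) - G(t, V)`, `V(0) = V₀`,
in Banach spaces, with `A` a bounded linear operator. -/
theorem pdae_local_existence_uniqueness
    {E S H : Type*}
    [NormedAddCommGroup E] [NormedSpace ℝ E] [CompleteSpace E]
    [NormedAddCommGroup S] [NormedSpace ℝ S] [CompleteSpace S]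
    [NormedAddCommGroup H] [NormedSpace ℝ H] [CompleteSpace H]
    (A : E →L[ℝ] E) (L : S ≃L[ℝ] H)
    (F : ℝ × E × S → E) (hFc : Continuous F)
    (hFlip : ∀ t' > (0 : ℝ), ∀ r > (0 : ℝ), ∃ Lip ≥ (0 : ℝ),
      ∀ t ∈ Icc (0 : ℝ) t', ∀ V₁ V₂ : E, ∀ w₁ w₂ : S,
        ‖V₁‖ + ‖w₁‖ ≤ r → ‖V₂‖ + ‖w₂‖ ≤ r →
        ‖F (t, V₁, w₁) - F (t, V₂, w₂)‖ ≤ Lip * (‖V₁ - V₂‖ + ‖w₁ - w₂‖))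
    (G : ℝ × E → H) (hGc : Continuous G)
    (hGlip : ∀ t' > (0 : ℝ), ∀ C > (0 : ℝ), ∃ L₂ ≥ (0 : ℝ),
      ∀ t ∈ Icc (0 : ℝ) t', ∀ V₁ V₂ : E,
        ‖V₁‖ ≤ C → ‖V₂‖ ≤ C →
        ‖G (t, V₁) - G (t, V₂)‖ ≤ L₂ * ‖V₁ - V₂‖)
    (V₀ : E) :
    ∃ ε > (0 : ℝ), ∃ V : ℝ → E, ∃ w : ℝ → S,
      (ContinuousOn V (Icc 0 ε) ∧ ContinuousOn w (Icc 0 ε) ∧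
        V 0 = V₀ ∧
        ∀ t ∈ Icc (0 : ℝ) ε,
          HasDerivAt V (A (V t) + F (t, V t, w t)) t ∧ L (w t) = G (t, V t)) ∧
      ∀ V' : ℝ → E, ∀ w' : ℝ → S,
        (ContinuousOn V' (Icc 0 ε) ∧ ContinuousOn w' (Icc 0 ε) ∧
          V' 0 = V₀ ∧
          ∀ t ∈ Icc (0 : ℝ) ε,
            HasDerivAt V' (A (V' t) + F (t, V' t, w' t)) t ∧ L (w' t) = G (t, V' t)) →
        ∀ t ∈ Icc (0 : ℝ) ε, V' t = V t ∧ w' t = w t :=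
  pdae_local_existence_uniqueness_general A L F hFc hFlip G hGc hGlip V₀
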